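/- Let N, K be positive integers. For each k ∈ {1,…,K} let H_k be an N×N Hermitian positive semidefinite complex matrix, σ_k > 0, R_k^th ∈ ℝ, c_k ≥ 0, and let W_c, W_0, W_{p,1},…,W_{p,K} be N×N Hermitian positive semidefinite complex matrices satisfying: (i) Re Tr(W_c) + Σ_k Re Tr(W_{p,k}) + Re Tr(W_0) ≤ P_max; (ii) for every k, Σ_j c_j ≤ log₂(1 + Re Tr(H_k W_c)/(Σ_i Re Tr(H_k W_{p,i}) + Re Tr(H_k W_0) + σ_k²)); (iii) for every k, c_k + log₂(1 + Re Tr(H_k W_{p,k})/(Σ_{j≠k} Re Tr(H_k W_{p,j}) + Re Tr(H_k W_0) + σ_k²)) ≥ R_k^th. Then the matrices W_c' = W_c + W_0, W_{p,k}' = W_{p,k}, W_0' = 0 are Hermitian positive semidefinite, satisfy constraints (i), (ii), (iii), and satisfy W_c' + Σ_k W_{p,k}' + W_0' = W_c + Σ_k W_{p,k} + W_0. Consequently, transmitting only communication waveforms achieves the same transmit covariance Q (and hence the same sensing SINR) as transmitting communication plus dedicated sensing waveforms. -/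

import Mathlib

/-!
Absorbing the sensing covariance `W₀` into the common-stream covariance leaves the total
covariance unchanged, so the power constraint and the sensing SINR are untouched. For every
user the common stream gains the useful power `Re Tr(H_k W₀) ≥ 0` in its numerator and every
stream loses it as interference in its denominator; since `x ↦ log₂ (1 + x)` is monotone, all
rate constraints remain satisfied.
-/

open Matrix
open scoped ComplexOrder

open scoped MatrixOrder Matrix.Norms.L2Operator in
theorem Matrix.PosSemidef.trace_mul_nonneg {𝕜 n : Type*} [RCLike 𝕜] [Fintype n]
    {A B : Matrix n n 𝕜} (hA : A.PosSemidef) (hB : B.PosSemidef) : 0 ≤ (A * B).trace := by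
  classical
  obtain ⟨C, rfl⟩ := CStarAlgebra.nonneg_iff_eq_star_mul_self.mp hB.nonneg
  rw [star_eq_conjTranspose, ← mul_assoc, trace_mul_cycle]
  exact (hA.mul_mul_conjTranspose_same C).trace_nonneg

theorem Matrix.PosSemidef.re_trace_mul_nonneg {n : Type*} [Fintype n]
    {A B : Matrix n n ℂ} (hA : A.PosSemidef) (hB : B.PosSemidef) : 0 ≤ (A * B).trace.re :=
  (Complex.nonneg_iff.mp (hA.trace_mul_nonneg hB)).1

theorem Real.logb_one_add_div_le_logb_one_add_div {b a a' d d' : ℝ} (hb : 1 < b)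
    (ha : 0 ≤ a) (haa' : a ≤ a') (hd' : 0 < d') (hd'd : d' ≤ d) :
    logb b (1 + a / d) ≤ logb b (1 + a' / d') := by
  have hd : 0 < d := hd'.trans_le hd'd
  apply logb_le_logb_of_le hb (by positivity)
  gcongr
  exact ha.trans haa'

theorem dedicated_sensing_waveform_unnecessary_general
    (N K : ℕ)
    (Pmax : ℝ)
    (H : Fin K → Matrix (Fin N) (Fin N) ℂ) (hH : ∀ k, (H k).PosSemidef)
    (σ : Fin K → ℝ) (hσ : ∀ k, 0 < σ k)
    (Rth : Fin K → ℝ)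
    (c : Fin K → ℝ)
    (Wc W0 : Matrix (Fin N) (Fin N) ℂ)
    (Wp : Fin K → Matrix (Fin N) (Fin N) ℂ)
    (hWc : Wc.PosSemidef) (hW0 : W0.PosSemidef) (hWp : ∀ k, (Wp k).PosSemidef)
    -- (i) power constraint
    (hpow : Wc.trace.re + ∑ k, (Wp k).trace.re + W0.trace.re ≤ Pmax)
    -- (ii) common-stream rate constraint
    (hcom : ∀ k, ∑ j, c j ≤
      Real.logb 2 (1 + (H k * Wc).trace.re /
        (∑ i, (H k * Wp i).trace.re + (H k * W0).trace.re + σ k ^ 2)))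
    -- (iii) private-stream rate constraint
    (hpriv : ∀ k, c k +
      Real.logb 2 (1 + (H k * Wp k).trace.re /
        (∑ j ∈ Finset.univ.erase k, (H k * Wp j).trace.re +
          (H k * W0).trace.re + σ k ^ 2)) ≥ Rth k) :
    -- the communication-only matrices are Hermitian positive semidefinite
    (Wc + W0).PosSemidef ∧
    (∀ k, (Wp k).PosSemidef) ∧
    (0 : Matrix (Fin N) (Fin N) ℂ).PosSemidef ∧
    -- (i) power constraint still holds
    (Wc + W0).trace.re + ∑ k, (Wp k).trace.re +
      (0 : Matrix (Fin N) (Fin N) ℂ).trace.re ≤ Pmax ∧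
    -- (ii) common-stream rate constraint still holds
    (∀ k, ∑ j, c j ≤
      Real.logb 2 (1 + (H k * (Wc + W0)).trace.re /
        (∑ i, (H k * Wp i).trace.re +
          (H k * (0 : Matrix (Fin N) (Fin N) ℂ)).trace.re + σ k ^ 2))) ∧
    -- (iii) private-stream rate constraint still holds
    (∀ k, c k +
      Real.logb 2 (1 + (H k * Wp k).trace.re /
        (∑ j ∈ Finset.univ.erase k, (H k * Wp j).trace.re +
          (H k * (0 : Matrix (Fin N) (Fin N) ℂ)).trace.re + σ k ^ 2)) ≥
        Rth k) ∧
    -- the total transmit covariance is unchanged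
    (Wc + W0) + ∑ k, Wp k + (0 : Matrix (Fin N) (Fin N) ℂ)
      = Wc + ∑ k, Wp k + W0 := by
  have hgain : ∀ k {W : Matrix (Fin N) (Fin N) ℂ}, W.PosSemidef → 0 ≤ (H k * W).trace.re :=
    fun k _ hW => (hH k).re_trace_mul_nonneg hW
  have hnoise : ∀ k, 0 < σ k ^ 2 := fun k => pow_pos (hσ k) 2
  simp only [mul_zero, trace_zero, Complex.zero_re, add_zero, mul_add, trace_add, Complex.add_re]
  refine ⟨hWc.add hW0, hWp, .zero, by linarith, fun k => (hcom k).trans ?_,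
    fun k => (hpriv k).trans (add_le_add le_rfl ?_), by abel⟩
  · have hinterf : 0 ≤ ∑ i, (H k * Wp i).trace.re := Finset.sum_nonneg fun i _ => hgain k (hWp i)
    exact Real.logb_one_add_div_le_logb_one_add_div one_lt_two (hgain k hWc)
      (le_add_of_nonneg_right (hgain k hW0)) (by linarith [hnoise k]) (by linarith [hgain k hW0])
  · have hinterf : 0 ≤ ∑ j ∈ Finset.univ.erase k, (H k * Wp j).trace.re :=
      Finset.sum_nonneg fun j _ => hgain k (hWp j)
    exact Real.logb_one_add_div_le_logb_one_add_div one_lt_two (hgain k (hWp k)) le_rfl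
      (by linarith [hnoise k]) (by linarith [hgain k hW0])

theorem dedicated_sensing_waveform_unnecessary
    (N K : ℕ) (hN : 0 < N) (hK : 0 < K)
    (Pmax : ℝ) (hP : 0 < Pmax)
    (H : Fin K → Matrix (Fin N) (Fin N) ℂ) (hH : ∀ k, (H k).PosSemidef)
    (σ : Fin K → ℝ) (hσ : ∀ k, 0 < σ k)
    (Rth : Fin K → ℝ)
    (c : Fin K → ℝ) (hc : ∀ k, 0 ≤ c k)
    (Wc W0 : Matrix (Fin N) (Fin N) ℂ)
    (Wp : Fin K → Matrix (Fin N) (Fin N) ℂ)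
    (hWc : Wc.PosSemidef) (hW0 : W0.PosSemidef) (hWp : ∀ k, (Wp k).PosSemidef)
    -- (i) power constraint
    (hpow : Wc.trace.re + ∑ k, (Wp k).trace.re + W0.trace.re ≤ Pmax)
    -- (ii) common-stream rate constraint
    (hcom : ∀ k, ∑ j, c j ≤
      Real.logb 2 (1 + (H k * Wc).trace.re /
        (∑ i, (H k * Wp i).trace.re + (H k * W0).trace.re + σ k ^ 2)))
    -- (iii) private-stream rate constraint
    (hpriv : ∀ k, c k +
      Real.logb 2 (1 + (H k * Wp k).trace.re /
        (∑ j ∈ Finset.univ.erase k, (H k * Wp j).trace.re +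
          (H k * W0).trace.re + σ k ^ 2)) ≥ Rth k) :
    -- the communication-only matrices are Hermitian positive semidefinite
    (Wc + W0).PosSemidef ∧
    (∀ k, (Wp k).PosSemidef) ∧
    (0 : Matrix (Fin N) (Fin N) ℂ).PosSemidef ∧
    -- (i) power constraint still holds
    (Wc + W0).trace.re + ∑ k, (Wp k).trace.re +
      (0 : Matrix (Fin N) (Fin N) ℂ).trace.re ≤ Pmax ∧
    -- (ii) common-stream rate constraint still holds
    (∀ k, ∑ j, c j ≤
      Real.logb 2 (1 + (H k * (Wc + W0)).trace.re /
        (∑ i, (H k * Wp i).trace.re +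
          (H k * (0 : Matrix (Fin N) (Fin N) ℂ)).trace.re + σ k ^ 2))) ∧
    -- (iii) private-stream rate constraint still holds
    (∀ k, c k +
      Real.logb 2 (1 + (H k * Wp k).trace.re /
        (∑ j ∈ Finset.univ.erase k, (H k * Wp j).trace.re +
          (H k * (0 : Matrix (Fin N) (Fin N) ℂ)).trace.re + σ k ^ 2)) ≥
        Rth k) ∧
    -- the total transmit covariance is unchanged
    (Wc + W0) + ∑ k, Wp k + (0 : Matrix (Fin N) (Fin N) ℂ)
      = Wc + ∑ k, Wp k + W0 :=
  dedicated_sensing_waveform_unnecessary_general N K Pmax H hH σ hσ Rth c Wc W0 Wp hWc hW0 hWp hpow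
    hcom hpriv
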